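/- Let (A, Δ) be a regular multiplier Hopf algebra and R a left A-module algebra. There is a well-defined map π : A → M(R # A) determined by π(a)(x' # a') = Σ a₍₁₎x' # a₍₂₎a' and (x' # a')π(a) = x' # a'a for all a, a' ∈ A and x' ∈ R; this map is an algebra homomorphism, and it is unital in the sense that π(A)(R # A) = (R # A)π(A) = R # A. -/

import Mathlib

/-! # A framework for (regular) multiplier Hopf algebras, following
Drabant–Van Daele–Zhang, "Actions of Multiplier Hopf Algebras".

Algebras are (possibly non-unital) associative algebras over `ℂ` with
non-degenerate product.  A multiplier of such an algebra (whose multiplication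
is recorded as a bilinear map `mul`) is a pair `(L, R)` of linear maps with
`L (x*y) = L x * y`, `R (x*y) = x * R y` and `x * L y = R x * y`; this is the
standard description of the multiplier algebra `M(A)`.

A regular multiplier Hopf algebra is recorded by the comultiplication
`Δ : A → M(A ⊗ A)` together with the four canonical maps
`T1 a b = Δ(a)(1 ⊗ b)`, `T2 a b = (a ⊗ 1)Δ(b)`, `T3 a b = Δ(a)(b ⊗ 1)`,
`T4 a b = (1 ⊗ a)Δ(b)` (all with values in `A ⊗ A`), which are required to be
bijective as maps of `A ⊗ A`; together with the counit and the (bijective)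
antipode satisfying the usual axioms, expressed in covered (Sweedler) form. -/

open scoped TensorProduct
open TensorProduct LinearMap

noncomputable section

/-! ## Multipliers -/

section MulPair

variable {X : Type*} [AddCommGroup X] [Module ℂ X]

/-- A multiplier of the (possibly non-unital) algebra `(X, mul)`. -/
@[ext]
structure MulPair (mul : X →ₗ[ℂ] X →ₗ[ℂ] X) : Type _ where
  L : X →ₗ[ℂ] X
  R : X →ₗ[ℂ] X
  L_mul : ∀ x y : X, L (mul x y) = mul (L x) y
  R_mul : ∀ x y : X, R (mul x y) = mul x (R y)
  middle : ∀ x y : X, mul x (L y) = mul (R x) y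

namespace MulPair

variable {mul : X →ₗ[ℂ] X →ₗ[ℂ] X}

instance : One (MulPair mul) :=
  ⟨⟨LinearMap.id, LinearMap.id, fun _ _ => rfl, fun _ _ => rfl, fun _ _ => rfl⟩⟩

@[simp] theorem one_L : (1 : MulPair mul).L = LinearMap.id := rfl
@[simp] theorem one_R : (1 : MulPair mul).R = LinearMap.id := rfl

instance : Mul (MulPair mul) :=
  ⟨fun m n =>
    ⟨m.L ∘ₗ n.L, n.R ∘ₗ m.R,
      fun x y => by simp [n.L_mul, m.L_mul],
      fun x y => by simp [m.R_mul, n.R_mul],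
      fun x y => by simp [m.middle, n.middle]⟩⟩

@[simp] theorem mul_L (m n : MulPair mul) : (m * n).L = m.L ∘ₗ n.L := rfl
@[simp] theorem mul_R (m n : MulPair mul) : (m * n).R = n.R ∘ₗ m.R := rfl

instance : Zero (MulPair mul) :=
  ⟨⟨0, 0, fun x y => by simp, fun x y => by simp, fun x y => by simp⟩⟩

@[simp] theorem zero_L : (0 : MulPair mul).L = 0 := rfl
@[simp] theorem zero_R : (0 : MulPair mul).R = 0 := rfl

instance : Add (MulPair mul) :=
  ⟨fun m n =>
    ⟨m.L + n.L, m.R + n.R,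
      fun x y => by simp [m.L_mul, n.L_mul],
      fun x y => by simp [m.R_mul, n.R_mul],
      fun x y => by simp [m.middle, n.middle]⟩⟩

@[simp] theorem add_L (m n : MulPair mul) : (m + n).L = m.L + n.L := rfl
@[simp] theorem add_R (m n : MulPair mul) : (m + n).R = m.R + n.R := rfl

instance : Neg (MulPair mul) :=
  ⟨fun m =>
    ⟨-m.L, -m.R,
      fun x y => by simp [m.L_mul],
      fun x y => by simp [m.R_mul],
      fun x y => by simp [m.middle]⟩⟩

@[simp] theorem neg_L (m : MulPair mul) : (-m).L = -m.L := rfl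
@[simp] theorem neg_R (m : MulPair mul) : (-m).R = -m.R := rfl

instance : Sub (MulPair mul) :=
  ⟨fun m n =>
    ⟨m.L - n.L, m.R - n.R,
      fun x y => by simp [m.L_mul, n.L_mul, sub_eq_add_neg],
      fun x y => by simp [m.R_mul, n.R_mul, sub_eq_add_neg],
      fun x y => by simp [m.middle, n.middle, sub_eq_add_neg]⟩⟩

@[simp] theorem sub_L (m n : MulPair mul) : (m - n).L = m.L - n.L := rfl
@[simp] theorem sub_R (m n : MulPair mul) : (m - n).R = m.R - n.R := rfl

instance : SMul ℂ (MulPair mul) :=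
  ⟨fun c m =>
    ⟨c • m.L, c • m.R,
      fun x y => by simp [m.L_mul],
      fun x y => by simp [m.R_mul],
      fun x y => by simp [m.middle]⟩⟩

@[simp] theorem smul_L (c : ℂ) (m : MulPair mul) : (c • m).L = c • m.L := rfl
@[simp] theorem smul_R (c : ℂ) (m : MulPair mul) : (c • m).R = c • m.R := rfl

instance : SMul ℕ (MulPair mul) :=
  ⟨fun n m =>
    ⟨n • m.L, n • m.R,
      fun x y => by simp [m.L_mul],
      fun x y => by simp [m.R_mul],
      fun x y => by simp [m.middle]⟩⟩

@[simp] theorem nsmul_L (n : ℕ) (m : MulPair mul) : (n • m).L = n • m.L := rfl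
@[simp] theorem nsmul_R (n : ℕ) (m : MulPair mul) : (n • m).R = n • m.R := rfl

instance : SMul ℤ (MulPair mul) :=
  ⟨fun n m =>
    ⟨n • m.L, n • m.R,
      fun x y => by simp [m.L_mul],
      fun x y => by simp [m.R_mul],
      fun x y => by simp [m.middle]⟩⟩

@[simp] theorem zsmul_L (n : ℤ) (m : MulPair mul) : (n • m).L = n • m.L := rfl
@[simp] theorem zsmul_R (n : ℤ) (m : MulPair mul) : (n • m).R = n • m.R := rfl

/-- The underlying pair of linear maps. -/
def toProd (m : MulPair mul) : (X →ₗ[ℂ] X) × (X →ₗ[ℂ] X) := (m.L, m.R)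

theorem toProd_injective : Function.Injective (toProd (mul := mul)) := by
  intro m n h
  have h1 : m.L = n.L := congrArg Prod.fst h
  have h2 : m.R = n.R := congrArg Prod.snd h
  exact MulPair.ext h1 h2

instance : AddCommGroup (MulPair mul) :=
  toProd_injective.addCommGroup toProd rfl (fun _ _ => rfl) (fun _ => rfl)
    (fun _ _ => rfl) (fun _ _ => rfl) (fun _ _ => rfl)

/-- `toProd` as an additive monoid homomorphism. -/
def toProdHom : MulPair mul →+ (X →ₗ[ℂ] X) × (X →ₗ[ℂ] X) :=
  { toFun := toProd, map_zero' := rfl, map_add' := fun _ _ => rfl }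

instance : Module ℂ (MulPair mul) :=
  Function.Injective.module ℂ (toProdHom (mul := mul)) toProd_injective fun _ _ => rfl

theorem mul_add (m n k : MulPair mul) : m * (n + k) = m * n + m * k := by
  ext x <;> simp

theorem add_mul (m n k : MulPair mul) : (m + n) * k = m * k + n * k := by
  ext x <;> simp

theorem smul_mul (c : ℂ) (m n : MulPair mul) : (c • m) * n = c • (m * n) := by
  ext x <;> simp

theorem mul_smul (c : ℂ) (m n : MulPair mul) : m * (c • n) = c • (m * n) := by
  ext x <;> simp

theorem mul_assoc (m n k : MulPair mul) : m * n * k = m * (n * k) := by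
  ext x <;> simp [LinearMap.comp_assoc]

end MulPair

end MulPair

/-! ## Slice maps -/

section Slices

variable {X Y : Type*} [AddCommGroup X] [Module ℂ X] [AddCommGroup Y] [Module ℂ Y]

/-- Apply a functional to the second tensor leg: `(ι ⊗ φ)`. -/
def sliceR (φ : X →ₗ[ℂ] ℂ) : Y ⊗[ℂ] X →ₗ[ℂ] Y :=
  (TensorProduct.rid ℂ Y).toLinearMap ∘ₗ LinearMap.lTensor Y φ

/-- Apply a functional to the first tensor leg: `(φ ⊗ ι)`. -/
def sliceL (φ : X →ₗ[ℂ] ℂ) : X ⊗[ℂ] Y →ₗ[ℂ] Y :=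
  (TensorProduct.lid ℂ Y).toLinearMap ∘ₗ LinearMap.rTensor Y φ

@[simp] theorem sliceR_tmul (φ : X →ₗ[ℂ] ℂ) (y : Y) (x : X) :
    sliceR φ (y ⊗ₜ[ℂ] x) = φ x • y := by simp [sliceR]

@[simp] theorem sliceL_tmul (φ : X →ₗ[ℂ] ℂ) (x : X) (y : Y) :
    sliceL φ (x ⊗ₜ[ℂ] y) = φ x • y := by simp [sliceL]

end Slices

/-! ## Regular multiplier Hopf algebras -/

section RegMultHopf

variable (A : Type*) [NonUnitalRing A] [Module ℂ A] [SMulCommClass ℂ A A]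
  [IsScalarTower ℂ A A]

/-- The componentwise multiplication of `A ⊗ A`, as a bilinear map. -/
def tmulMul : (A ⊗[ℂ] A) →ₗ[ℂ] (A ⊗[ℂ] A) →ₗ[ℂ] (A ⊗[ℂ] A) :=
  TensorProduct.curry
    ((TensorProduct.map (LinearMap.mul' ℂ A) (LinearMap.mul' ℂ A)) ∘ₗ
      (TensorProduct.tensorTensorTensorComm ℂ A A A A).toLinearMap)

@[simp] theorem tmulMul_tmul (x y x' y' : A) :
    tmulMul A (x ⊗ₜ[ℂ] y) (x' ⊗ₜ[ℂ] y') = (x * x') ⊗ₜ[ℂ] (y * y') := by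
  simp [tmulMul]

variable {A}

/-- A regular multiplier Hopf algebra structure on the non-unital algebra `A`
(Van Daele; see Section 2 of the paper).  The product of `A` is required to be
non-degenerate; `Δ` is the comultiplication with values in the multiplier
algebra `M(A ⊗ A)`; `T1 a b = Δ(a)(1 ⊗ b)`, `T2 a b = (a ⊗ 1)Δ(b)`,
`T3 a b = Δ(a)(b ⊗ 1)` and `T4 a b = (1 ⊗ a)Δ(b)` are the canonical maps with
values in `A ⊗ A`, and the four lifted maps on `A ⊗ A` are bijective (the last
two bijectivity conditions express regularity).  `counit` and the bijective
antipode `S` satisfy the usual axioms in covered form. -/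
structure RegMultHopf : Type _ where
  nondegL : ∀ a : A, (∀ b : A, a * b = 0) → a = 0
  nondegR : ∀ a : A, (∀ b : A, b * a = 0) → a = 0
  Δ : A → MulPair (tmulMul A)
  Δ_add : ∀ a b : A, Δ (a + b) = Δ a + Δ b
  Δ_smul : ∀ (c : ℂ) (a : A), Δ (c • a) = c • Δ a
  Δ_mul : ∀ a b : A, Δ (a * b) = Δ a * Δ b
  T1 : A →ₗ[ℂ] A →ₗ[ℂ] A ⊗[ℂ] A
  T2 : A →ₗ[ℂ] A →ₗ[ℂ] A ⊗[ℂ] A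
  T3 : A →ₗ[ℂ] A →ₗ[ℂ] A ⊗[ℂ] A
  T4 : A →ₗ[ℂ] A →ₗ[ℂ] A ⊗[ℂ] A
  T1_spec : ∀ (a b : A) (u : A ⊗[ℂ] A),
    tmulMul A (T1 a b) u = (Δ a).L (LinearMap.lTensor A (LinearMap.mulLeft ℂ b) u)
  T2_spec : ∀ (a b : A) (u : A ⊗[ℂ] A),
    tmulMul A u (T2 a b) = (Δ b).R (LinearMap.rTensor A (LinearMap.mulRight ℂ a) u)
  T3_spec : ∀ (a b : A) (u : A ⊗[ℂ] A),
    tmulMul A (T3 a b) u = (Δ a).L (LinearMap.rTensor A (LinearMap.mulLeft ℂ b) u)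
  T4_spec : ∀ (a b : A) (u : A ⊗[ℂ] A),
    tmulMul A u (T4 a b) = (Δ b).R (LinearMap.lTensor A (LinearMap.mulRight ℂ a) u)
  T1_bij : Function.Bijective (TensorProduct.lift T1)
  T2_bij : Function.Bijective (TensorProduct.lift T2)
  T3_bij : Function.Bijective (TensorProduct.lift T3)
  T4_bij : Function.Bijective (TensorProduct.lift T4)
  coassoc : ∀ a b c : A,
    (TensorProduct.assoc ℂ A A A) (LinearMap.rTensor A (T2 a) (T1 b c)) =
      LinearMap.lTensor A (T1.flip c) (T2 a b)
  counit : A →ₗ[ℂ] ℂ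
  counit_mul : ∀ a b : A, counit (a * b) = counit a * counit b
  counit_T1 : ∀ a b : A, sliceL counit (T1 a b) = a * b
  counit_T2 : ∀ a b : A, sliceR counit (T2 a b) = a * b
  S : A →ₗ[ℂ] A
  Sinv : A →ₗ[ℂ] A
  S_Sinv : ∀ a : A, S (Sinv a) = a
  Sinv_S : ∀ a : A, Sinv (S a) = a
  S_mul : ∀ a b : A, S (a * b) = S b * S a
  S_T1 : ∀ a b : A,
    LinearMap.mul' ℂ A (LinearMap.rTensor A S (T1 a b)) = counit a • b
  S_T2 : ∀ a b : A,
    LinearMap.mul' ℂ A (LinearMap.lTensor A S (T2 a b)) = counit b • a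

/-- `φ` is a left integral on `(A, Δ)`: a non-zero functional with
`(ι ⊗ φ)Δ(a) = φ(a)1` in `M(A)`; evaluated against elements of `A` this
reads `(ι ⊗ φ)(Δ(a)(b ⊗ 1)) = φ(a)b` and `(ι ⊗ φ)((b ⊗ 1)Δ(a)) = φ(a)b`. -/
def IsLeftIntegral (H : RegMultHopf (A := A)) (φ : A →ₗ[ℂ] ℂ) : Prop :=
  φ ≠ 0 ∧ (∀ a b : A, sliceR φ (H.T3 a b) = φ a • b) ∧
    ∀ a b : A, sliceR φ (H.T2 b a) = φ a • b

end RegMultHopf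

/-! ## Module algebras and smash products -/

section ModAlg

variable {A : Type*} [NonUnitalRing A] [Module ℂ A] [SMulCommClass ℂ A A]
  [IsScalarTower ℂ A A]
variable {R : Type*} [AddCommGroup R] [Module ℂ R]

/-- The bilinear map `(p, q) ↦ (p ▷ x) ⬝ (q ▷ z)` used to express the module
algebra condition `a ▷ (x ⬝ y) = Σ (a₍₁₎ ▷ x) ⬝ (a₍₂₎ ▷ y)` in covered form. -/
def actPair (mulR : R →ₗ[ℂ] R →ₗ[ℂ] R) (act : A →ₗ[ℂ] R →ₗ[ℂ] R) (x z : R) :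
    A →ₗ[ℂ] A →ₗ[ℂ] R :=
  LinearMap.mk₂ ℂ (fun p q => mulR (act p x) (act q z))
    (fun p p' q => by simp)
    (fun c p q => by simp)
    (fun p q q' => by simp)
    (fun c p q => by simp)

/-- `R`, an algebra with multiplication `mulR` (associative, with
non-degenerate product), is a left `A`-module algebra for the unital action
`act`; the compatibility `a(xy) = Σ (a₍₁₎x)(a₍₂₎y)` is expressed in the
covered form `a ▷ (x ⬝ (b ▷ z)) = Σ (a₍₁₎ ▷ x) ⬝ ((a₍₂₎ b) ▷ z)` using
`T1 a b = Δ(a)(1 ⊗ b)`. -/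
structure IsModAlg (H : RegMultHopf (A := A)) (mulR : R →ₗ[ℂ] R →ₗ[ℂ] R)
    (act : A →ₗ[ℂ] R →ₗ[ℂ] R) : Prop where
  mul_assoc' : ∀ x y z : R, mulR (mulR x y) z = mulR x (mulR y z)
  mul_nondegL : ∀ x : R, (∀ y : R, mulR x y = 0) → x = 0
  mul_nondegR : ∀ x : R, (∀ y : R, mulR y x = 0) → x = 0
  act_act : ∀ (a b : A) (x : R), act (a * b) x = act a (act b x)
  unital : Submodule.span ℂ {y : R | ∃ a x, act a x = y} = ⊤
  compat : ∀ (a b : A) (x z : R),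
    act a (mulR x (act b z)) =
      TensorProduct.lift (actPair mulR act x z) (H.T1 a b)

/-- The bilinear map `(p, q) ↦ (x ⬝ (p ▷ x')) ⊗ q` describing the smash
product multiplication in covered form. -/
def smashPair (mulR : R →ₗ[ℂ] R →ₗ[ℂ] R) (act : A →ₗ[ℂ] R →ₗ[ℂ] R) (x x' : R) :
    A →ₗ[ℂ] A →ₗ[ℂ] R ⊗[ℂ] A :=
  LinearMap.mk₂ ℂ (fun p q => mulR x (act p x') ⊗ₜ[ℂ] q)
    (fun p p' q => by simp [add_tmul])
    (fun c p q => by simp [smul_tmul'])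
    (fun p q q' => by simp [tmul_add])
    (fun c p q => by simp [tmul_smul])

/-- The bilinear map `(p, q) ↦ p ▷ (f (q ▷ z))`, used to express in covered
form the extension of an action to the multiplier algebra `M(R)`:
`(a ▷ m)x = Σ a₍₁₎ ▷ (m (S(a₍₂₎) ▷ x))`. -/
def actSandwich (act : A →ₗ[ℂ] R →ₗ[ℂ] R) (f : R →ₗ[ℂ] R) (z : R) :
    A →ₗ[ℂ] A →ₗ[ℂ] R :=
  LinearMap.mk₂ ℂ (fun p q => act p (f (act q z)))
    (fun p p' q => by simp)
    (fun c p q => by simp)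
    (fun p q q' => by simp)
    (fun c p q => by simp)

/-- The bilinear map `(p, q) ↦ (x ⬝ γ(p)) ⊗ q` for a map `γ` into the
multiplier algebra `M(R)`. -/
def multTensorPair {mulR : R →ₗ[ℂ] R →ₗ[ℂ] R} (γ : A →ₗ[ℂ] MulPair mulR) (x : R) :
    A →ₗ[ℂ] A →ₗ[ℂ] R ⊗[ℂ] A :=
  LinearMap.mk₂ ℂ (fun p q => ((γ p).R x) ⊗ₜ[ℂ] q)
    (fun p p' q => by simp [add_tmul])
    (fun c p q => by simp [smul_tmul'])
    (fun p q q' => by simp [tmul_add])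
    (fun c p q => by simp [tmul_smul])

/-- `μ` is the multiplication of the smash product `R # A`:
`(x # a)(x' # a') = Σ x(a₍₁₎ ▷ x') # a₍₂₎a'`, expressed via
`T1 a a' = Δ(a)(1 ⊗ a') = Σ a₍₁₎ ⊗ a₍₂₎a'`. -/
def IsSmashMul (H : RegMultHopf (A := A)) (mulR : R →ₗ[ℂ] R →ₗ[ℂ] R)
    (act : A →ₗ[ℂ] R →ₗ[ℂ] R)
    (μ : (R ⊗[ℂ] A) →ₗ[ℂ] (R ⊗[ℂ] A) →ₗ[ℂ] (R ⊗[ℂ] A)) : Prop :=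
  ∀ (x x' : R) (a a' : A),
    μ (x ⊗ₜ[ℂ] a) (x' ⊗ₜ[ℂ] a') =
      TensorProduct.lift (smashPair mulR act x x') (H.T1 a a')

end ModAlg

/-! ## Dual pairs of regular multiplier Hopf algebras -/

section Pairing

variable {A B : Type*} [NonUnitalRing A] [Module ℂ A] [SMulCommClass ℂ A A]
  [IsScalarTower ℂ A A] [NonUnitalRing B] [Module ℂ B] [SMulCommClass ℂ B B]
  [IsScalarTower ℂ B B]

/-- A (non-degenerate) pairing of regular multiplier Hopf algebras in the
sense of Drabant–Van Daele.  `β` is the bilinear form; `lA a b = a ▷ b =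
Σ ⟨a, b₍₂₎⟩ b₍₁₎`, `lB b a = b ▷ a = Σ ⟨a₍₂₎, b⟩ a₍₁₎`, `rA a b = a ◁ b =
Σ ⟨a₍₁₎, b⟩ a₍₂₎`, `rB b a = b ◁ a = Σ ⟨a, b₍₁₎⟩ b₍₂₎` are the Sweedler leg
actions, tied to the comultiplications via the `..._leg` axioms and dual to
the multiplications via the `dual...` axioms; all four actions are unital
module actions. -/
structure MHAPairing (HA : RegMultHopf (A := A)) (HB : RegMultHopf (A := B)) :
    Type _ where
  β : A →ₗ[ℂ] B →ₗ[ℂ] ℂ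
  nondegA : ∀ a : A, (∀ b : B, β a b = 0) → a = 0
  nondegB : ∀ b : B, (∀ a : A, β a b = 0) → b = 0
  lA : A →ₗ[ℂ] B →ₗ[ℂ] B
  lB : B →ₗ[ℂ] A →ₗ[ℂ] A
  rA : A →ₗ[ℂ] B →ₗ[ℂ] A
  rB : B →ₗ[ℂ] A →ₗ[ℂ] B
  lA_leg : ∀ (a : A) (b c : B), sliceR (β a) (HB.T3 b c) = lA a b * c
  rB_leg : ∀ (a : A) (b c : B), sliceL (β a) (HB.T4 c b) = c * rB b a
  lB_leg : ∀ (b : B) (a c : A), sliceR (β.flip b) (HA.T3 a c) = lB b a * c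
  rA_leg : ∀ (b : B) (a c : A), sliceL (β.flip b) (HA.T4 c a) = c * rA a b
  dual1 : ∀ (a : A) (b b' : B), β a (b * b') = β (rA a b) b'
  dual2 : ∀ (a : A) (b b' : B), β a (b' * b) = β (lB b a) b'
  dual3 : ∀ (a a' : A) (b : B), β (a * a') b = β a' (rB b a)
  dual4 : ∀ (a a' : A) (b : B), β (a' * a) b = β a' (lA a b)
  lA_act : ∀ (a a' : A) (b : B), lA (a * a') b = lA a (lA a' b)
  lB_act : ∀ (b b' : B) (a : A), lB (b * b') a = lB b (lB b' a)
  rA_act : ∀ (a : A) (b b' : B), rA a (b * b') = rA (rA a b) b'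
  rB_act : ∀ (b : B) (a a' : A), rB b (a * a') = rB (rB b a) a'
  lA_unital : Submodule.span ℂ {y : B | ∃ a b, lA a b = y} = ⊤
  lB_unital : Submodule.span ℂ {y : A | ∃ b a, lB b a = y} = ⊤
  rA_unital : Submodule.span ℂ {y : A | ∃ a b, rA a b = y} = ⊤
  rB_unital : Submodule.span ℂ {y : B | ∃ b a, rB b a = y} = ⊤

end Pairing

/-! ## The dual action -/

section DualAction

variable {A B : Type*} [NonUnitalRing A] [Module ℂ A] [SMulCommClass ℂ A A]
  [IsScalarTower ℂ A A] [NonUnitalRing B] [Module ℂ B] [SMulCommClass ℂ B B]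
  [IsScalarTower ℂ B B]
variable {R : Type*} [AddCommGroup R] [Module ℂ R]
variable {HA : RegMultHopf (A := A)} {HB : RegMultHopf (A := B)}

/-- The dual action of `B` on the smash product `R # A`:
`b · (x # a) = x # (b ▷ a) = Σ ⟨a₍₂₎, b⟩ x # a₍₁₎`. -/
def dualAct (P : MHAPairing HA HB) : B →ₗ[ℂ] (R ⊗[ℂ] A) →ₗ[ℂ] R ⊗[ℂ] A :=
  (LinearMap.lTensorHom R) ∘ₗ P.lB

@[simp] theorem dualAct_tmul (P : MHAPairing HA HB) (b : B) (x : R) (a : A) :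
    dualAct P b (x ⊗ₜ[ℂ] a) = x ⊗ₜ[ℂ] P.lB b a := rfl

end DualAction

end
section Nondeg

variable {M V : Type*} [AddCommGroup M] [Module ℂ M] [AddCommGroup V] [Module ℂ V]

lemma sliceR_rTensor (φ : V →ₗ[ℂ] ℂ) (f : M →ₗ[ℂ] M) (t : M ⊗[ℂ] V) :
    sliceR φ (LinearMap.rTensor V f t) = f (sliceR φ t) := by
  induction t using TensorProduct.induction_on with
  | zero => simp
  | tmul a v => simp
  | add x y hx hy => simp [map_add, hx, hy]

lemma eq_zero_of_forall_sliceR (t : M ⊗[ℂ] V)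
    (h : ∀ φ : V →ₗ[ℂ] ℂ, sliceR φ t = 0) : t = 0 := by
  classical
  let b := Module.Basis.ofVectorSpace ℂ V
  set e : M ⊗[ℂ] V ≃ₗ[ℂ] M ⊗[ℂ] (Module.Basis.ofVectorSpaceIndex ℂ V →₀ ℂ) :=
    LinearEquiv.lTensor M b.repr with he
  have key : ∀ (s : M ⊗[ℂ] V) (i),
      TensorProduct.finsuppScalarRight ℂ ℂ M _ (e s) i = sliceR (b.coord i) s := by
    intro s i
    induction s using TensorProduct.induction_on with
    | zero => simp
    | tmul m v =>
        simp [he, LinearEquiv.lTensor, TensorProduct.finsuppScalarRight_apply_tmul_apply,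
          Module.Basis.coord_apply]
    | add x y hx hy => simp [map_add, hx, hy, Finsupp.add_apply]
  have : TensorProduct.finsuppScalarRight ℂ ℂ M _ (e t) = 0 := by
    ext i; rw [key]; simp [h]
  have : e t = 0 := by
    apply (TensorProduct.finsuppScalarRight ℂ ℂ M _).injective
    simpa using this
  simpa using congrArg e.symm this

end Nondeg
section NondegA

variable {A : Type*} [NonUnitalRing A] [Module ℂ A] [SMulCommClass ℂ A A]
  [IsScalarTower ℂ A A]
variable {V : Type*} [AddCommGroup V] [Module ℂ V]

lemma sliceL_lTensor {M : Type*} [AddCommGroup M] [Module ℂ M]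
    (φ : V →ₗ[ℂ] ℂ) (f : M →ₗ[ℂ] M) (t : V ⊗[ℂ] M) :
    sliceL φ (LinearMap.lTensor V f t) = f (sliceL φ t) := by
  induction t using TensorProduct.induction_on with
  | zero => simp
  | tmul a v => simp
  | add x y hx hy => simp [map_add, hx, hy]

lemma eq_zero_of_forall_sliceL {M : Type*} [AddCommGroup M] [Module ℂ M]
    (t : V ⊗[ℂ] M) (h : ∀ φ : V →ₗ[ℂ] ℂ, sliceL φ t = 0) : t = 0 := by
  have h2 : ∀ φ : V →ₗ[ℂ] ℂ, sliceR φ ((TensorProduct.comm ℂ V M) t) = 0 := by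
    intro φ
    have : ∀ s : V ⊗[ℂ] M, sliceR φ ((TensorProduct.comm ℂ V M) s) = sliceL φ s := by
      intro s
      induction s using TensorProduct.induction_on with
      | zero => simp
      | tmul a v => simp
      | add x y hx hy => simp [map_add, hx, hy]
    rw [this, h]
  have := eq_zero_of_forall_sliceR _ h2
  simpa using congrArg (TensorProduct.comm ℂ V M).symm this

/-- Detection in the first tensor leg. -/
lemma detect_first (F : A → A →ₗ[ℂ] A)
    (hdet : ∀ a : A, (∀ u : A, F u a = 0) → a = 0)
    {t t' : A ⊗[ℂ] V}
    (h : ∀ u : A, LinearMap.rTensor V (F u) t = LinearMap.rTensor V (F u) t') :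
    t = t' := by
  rw [← sub_eq_zero]
  apply eq_zero_of_forall_sliceR
  intro φ
  apply hdet
  intro u
  rw [← sliceR_rTensor φ (F u) (t - t'), map_sub, h u, sub_self, map_zero]

/-- Detection in the second tensor leg. -/
lemma detect_second (F : A → A →ₗ[ℂ] A)
    (hdet : ∀ a : A, (∀ u : A, F u a = 0) → a = 0)
    {t t' : V ⊗[ℂ] A}
    (h : ∀ u : A, LinearMap.lTensor V (F u) t = LinearMap.lTensor V (F u) t') :
    t = t' := by
  rw [← sub_eq_zero]
  apply eq_zero_of_forall_sliceL
  intro φ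
  apply hdet
  intro u
  rw [← sliceL_lTensor φ (F u) (t - t'), map_sub, h u, sub_self, map_zero]

end NondegA
set_option linter.unusedSectionVars false

section CommFacts

variable {M N P Q : Type*} [AddCommGroup M] [Module ℂ M] [AddCommGroup N] [Module ℂ N]
  [AddCommGroup P] [Module ℂ P] [AddCommGroup Q] [Module ℂ Q]

lemma rT_lT_comm (f : M →ₗ[ℂ] N) (g : P →ₗ[ℂ] Q) (t : M ⊗[ℂ] P) :
    LinearMap.rTensor Q f (LinearMap.lTensor M g t) =
      LinearMap.lTensor N g (LinearMap.rTensor P f t) := by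
  induction t using TensorProduct.induction_on with
  | zero => simp
  | tmul a v => simp
  | add x y hx hy => simp only [map_add, LinearMap.add_apply, hx, hy]

end CommFacts

section TmulMulFacts

variable {A : Type*} [NonUnitalRing A] [Module ℂ A] [SMulCommClass ℂ A A]
  [IsScalarTower ℂ A A]

open LinearMap

lemma tmulMul_apply_right (s : A ⊗[ℂ] A) (u₁ u₂ : A) :
    tmulMul A s (u₁ ⊗ₜ[ℂ] u₂) =
      rTensor A (mulRight ℂ u₁) (lTensor A (mulRight ℂ u₂) s) := by
  induction s using TensorProduct.induction_on with
  | zero => simp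
  | tmul a v => simp
  | add x y hx hy => simp only [map_add, LinearMap.add_apply, hx, hy]

lemma tmulMul_apply_left (s : A ⊗[ℂ] A) (u₁ u₂ : A) :
    tmulMul A (u₁ ⊗ₜ[ℂ] u₂) s =
      rTensor A (mulLeft ℂ u₁) (lTensor A (mulLeft ℂ u₂) s) := by
  induction s using TensorProduct.induction_on with
  | zero => simp
  | tmul a v => simp
  | add x y hx hy => simp only [map_add, LinearMap.add_apply, hx, hy]

/-- Right non-degeneracy of the product of `A ⊗ A`. -/
lemma tmulMul_right_ext (H : RegMultHopf (A := A)) {s s' : A ⊗[ℂ] A}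
    (h : ∀ u : A ⊗[ℂ] A, tmulMul A s u = tmulMul A s' u) : s = s' := by
  have hdet : ∀ a : A, (∀ u : A, mulRight ℂ u a = 0) → a = 0 := fun a ha =>
    H.nondegL a (by simpa using ha)
  apply detect_first (fun u => mulRight ℂ u) hdet
  intro u₁
  apply detect_second (fun u => mulRight ℂ u) hdet
  intro u₂
  have h2 := h (u₁ ⊗ₜ[ℂ] u₂)
  rw [tmulMul_apply_right, tmulMul_apply_right] at h2
  rw [← rT_lT_comm, ← rT_lT_comm]
  exact h2

/-- Left non-degeneracy of the product of `A ⊗ A`. -/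
lemma tmulMul_left_ext (H : RegMultHopf (A := A)) {s s' : A ⊗[ℂ] A}
    (h : ∀ u : A ⊗[ℂ] A, tmulMul A u s = tmulMul A u s') : s = s' := by
  have hdet : ∀ a : A, (∀ u : A, mulLeft ℂ u a = 0) → a = 0 := fun a ha =>
    H.nondegR a (by simpa using ha)
  apply detect_first (fun u => mulLeft ℂ u) hdet
  intro u₁
  apply detect_second (fun u => mulLeft ℂ u) hdet
  intro u₂
  have h2 := h (u₁ ⊗ₜ[ℂ] u₂)
  rw [tmulMul_apply_left, tmulMul_apply_left] at h2
  rw [← rT_lT_comm, ← rT_lT_comm]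
  exact h2

lemma tmulMul_assoc (s t u : A ⊗[ℂ] A) :
    tmulMul A (tmulMul A s t) u = tmulMul A s (tmulMul A t u) := by
  induction s using TensorProduct.induction_on with
  | zero => simp
  | add x y hx hy => simp only [map_add, LinearMap.add_apply, hx, hy]
  | tmul a b =>
    induction t using TensorProduct.induction_on with
    | zero => simp
    | add x y hx hy => simp only [map_add, LinearMap.add_apply, hx, hy]
    | tmul c d =>
      induction u using TensorProduct.induction_on with
      | zero => simp
      | add x y hx hy => simp only [map_add, LinearMap.add_apply, hx, hy]
      | tmul e f => simp [mul_assoc]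

lemma tmulMul_lT_mulLeft (s u : A ⊗[ℂ] A) (p : A) :
    tmulMul A s (LinearMap.lTensor A (mulLeft ℂ p) u) =
      tmulMul A (LinearMap.lTensor A (mulRight ℂ p) s) u := by
  induction s using TensorProduct.induction_on with
  | zero => simp
  | add x y hx hy => simp only [map_add, LinearMap.add_apply, hx, hy]
  | tmul a b =>
    induction u using TensorProduct.induction_on with
    | zero => simp
    | add x y hx hy => simp only [map_add, LinearMap.add_apply, hx, hy]
    | tmul e f => simp [mul_assoc]

lemma tmulMul_rT_mulLeft (s u : A ⊗[ℂ] A) (p : A) :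
    tmulMul A s (LinearMap.rTensor A (mulLeft ℂ p) u) =
      tmulMul A (LinearMap.rTensor A (mulRight ℂ p) s) u := by
  induction s using TensorProduct.induction_on with
  | zero => simp
  | add x y hx hy => simp only [map_add, LinearMap.add_apply, hx, hy]
  | tmul a b =>
    induction u using TensorProduct.induction_on with
    | zero => simp
    | add x y hx hy => simp only [map_add, LinearMap.add_apply, hx, hy]
    | tmul e f => simp [mul_assoc]

lemma lT_mulRight_tmulMul (w t : A ⊗[ℂ] A) (p : A) :
    tmulMul A w (LinearMap.lTensor A (mulRight ℂ p) t) =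
      LinearMap.lTensor A (mulRight ℂ p) (tmulMul A w t) := by
  induction w using TensorProduct.induction_on with
  | zero => simp
  | add x y hx hy => simp only [map_add, LinearMap.add_apply, hx, hy]
  | tmul a b =>
    induction t using TensorProduct.induction_on with
    | zero => simp
    | add x y hx hy => simp only [map_add, LinearMap.add_apply, hx, hy]
    | tmul e f => simp [mul_assoc]

lemma lT_rT_mulLeft_eq_tmulMul (r s : A) (u : A ⊗[ℂ] A) :
    LinearMap.lTensor A (mulLeft ℂ s) (LinearMap.rTensor A (mulLeft ℂ r) u) =
      tmulMul A (r ⊗ₜ[ℂ] s) u := by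
  induction u using TensorProduct.induction_on with
  | zero => simp
  | add x y hx hy => simp only [map_add, LinearMap.add_apply, hx, hy]
  | tmul e f => simp

end TmulMulFacts
section HopfFacts

variable {A : Type*} [NonUnitalRing A] [Module ℂ A] [SMulCommClass ℂ A A]
  [IsScalarTower ℂ A A]

open LinearMap

lemma T1_mul_right (H : RegMultHopf (A := A)) (a b c : A) :
    H.T1 a (b * c) = lTensor A (mulRight ℂ c) (H.T1 a b) := by
  apply tmulMul_right_ext H
  intro u
  rw [← tmulMul_lT_mulLeft, H.T1_spec, H.T1_spec, mulLeft_mul,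
    LinearMap.lTensor_comp, LinearMap.comp_apply]

lemma T1_mul_left (H : RegMultHopf (A := A)) (a b c : A) :
    H.T1 (a * b) c = (H.Δ a).L (H.T1 b c) := by
  apply tmulMul_right_ext H
  intro u
  rw [H.T1_spec, H.Δ_mul, MulPair.mul_L, LinearMap.comp_apply, ← H.T1_spec,
    (H.Δ a).L_mul]

lemma tmulMul_T1 (H : RegMultHopf (A := A)) (w : A ⊗[ℂ] A) (r p : A) :
    tmulMul A w (H.T1 r p) = lTensor A (mulRight ℂ p) ((H.Δ r).R w) := by
  apply tmulMul_right_ext H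
  intro u
  rw [tmulMul_assoc, H.T1_spec, (H.Δ r).middle, tmulMul_lT_mulLeft]

lemma mulLeft_T1 (H : RegMultHopf (A := A)) (u r p : A) :
    rTensor A (mulLeft ℂ u) (H.T1 r p) = lTensor A (mulRight ℂ p) (H.T2 u r) := by
  apply tmulMul_left_ext H
  intro w
  rw [tmulMul_rT_mulLeft, tmulMul_T1, lT_mulRight_tmulMul, H.T2_spec]

lemma mulRight_T1 (H : RegMultHopf (A := A)) (a r s : A) :
    rTensor A (mulRight ℂ r) (H.T1 a s) = (H.Δ a).L (r ⊗ₜ[ℂ] s) := by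
  apply tmulMul_right_ext H
  intro u
  rw [← tmulMul_rT_mulLeft, H.T1_spec, lT_rT_mulLeft_eq_tmulMul, ← (H.Δ a).L_mul]

end HopfFacts
section AssocNat

variable {M M' N N' P : Type*} [AddCommGroup M] [Module ℂ M] [AddCommGroup M'] [Module ℂ M']
  [AddCommGroup N] [Module ℂ N] [AddCommGroup N'] [Module ℂ N']
  [AddCommGroup P] [Module ℂ P]

open LinearMap

lemma assoc_rT_rT (f : M →ₗ[ℂ] M') (z : (M ⊗[ℂ] N) ⊗[ℂ] P) :
    (TensorProduct.assoc ℂ M' N P) (rTensor P (rTensor N f) z) =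
      rTensor (N ⊗[ℂ] P) f ((TensorProduct.assoc ℂ M N P) z) := by
  induction z using TensorProduct.induction_on with
  | zero => simp
  | add x y hx hy => simp only [map_add, hx, hy]
  | tmul w s =>
    induction w using TensorProduct.induction_on with
    | zero => simp
    | add x y hx hy =>
        simp only [TensorProduct.add_tmul, map_add, hx, hy]
    | tmul m n => simp

lemma assoc_symm_mid (f : N →ₗ[ℂ] N') (z : M ⊗[ℂ] (N ⊗[ℂ] P)) :
    (TensorProduct.assoc ℂ M N' P).symm (lTensor M (rTensor P f) z) =
      rTensor P (lTensor M f) ((TensorProduct.assoc ℂ M N P).symm z) := by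
  induction z using TensorProduct.induction_on with
  | zero => simp
  | add x y hx hy => simp only [map_add, hx, hy]
  | tmul m w =>
    induction w using TensorProduct.induction_on with
    | zero => simp
    | add x y hx hy =>
        simp only [TensorProduct.tmul_add, map_add, hx, hy]
    | tmul n p => simp

end AssocNat

section StarLemma

variable {A : Type*} [NonUnitalRing A] [Module ℂ A] [SMulCommClass ℂ A A]
  [IsScalarTower ℂ A A]

open LinearMap

lemma mulRight_add' (p p' : A) : mulRight ℂ (p + p') = mulRight ℂ p + mulRight ℂ p' := by
  ext x; simp [mul_add]

lemma mulRight_smul' (c : ℂ) (p : A) : mulRight ℂ (c • p) = c • mulRight ℂ p := by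
  ext x; simp [mul_smul_comm]

/-- The bilinear map `(p, q) ↦ Σ (T1 a₍₁₎ p) ⊗ a₍₂₎q` appearing in the proof of
coassociativity for the smash product. -/
noncomputable def starMap (H : RegMultHopf (A := A)) (a : A) :
    A →ₗ[ℂ] A →ₗ[ℂ] (A ⊗[ℂ] A) ⊗[ℂ] A :=
  LinearMap.mk₂ ℂ (fun p q => rTensor A (H.T1.flip p) (H.T1 a q))
    (fun p p' q => by simp [map_add, LinearMap.rTensor_add])
    (fun c p q => by simp [map_smul, LinearMap.rTensor_smul])
    (fun p q q' => by simp [map_add])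
    (fun c p q => by simp [map_smul])

noncomputable def innerMap (H : RegMultHopf (A := A)) (V : A ⊗[ℂ] A) :
    A →ₗ[ℂ] A →ₗ[ℂ] A ⊗[ℂ] (A ⊗[ℂ] A) :=
  LinearMap.mk₂ ℂ
    (fun p q => lTensor A ((rTensor A (mulRight ℂ p)) ∘ₗ (H.T1.flip q)) V)
    (fun p p' q => by
      simp [mulRight_add', LinearMap.rTensor_add, LinearMap.add_comp,
        LinearMap.lTensor_add])
    (fun c p q => by
      simp [mulRight_smul', LinearMap.rTensor_smul, LinearMap.smul_comp,
        LinearMap.lTensor_smul])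
    (fun p q q' => by
      simp [map_add, LinearMap.comp_add, LinearMap.lTensor_add])
    (fun c p q => by
      simp [map_smul, LinearMap.comp_smul, LinearMap.lTensor_smul])

def deltaL (H : RegMultHopf (A := A)) (W : A ⊗[ℂ] A) : A →ₗ[ℂ] A ⊗[ℂ] A where
  toFun β := (H.Δ β).L W
  map_add' β γ := by show (H.Δ (β + γ)).L W = _; rw [H.Δ_add]; simp
  map_smul' c β := by show (H.Δ (c • β)).L W = _; rw [H.Δ_smul]; simp

lemma swap_lemma (H : RegMultHopf (A := A)) (V W : A ⊗[ℂ] A) :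
    TensorProduct.lift (innerMap H V) W = lTensor A (deltaL H W) V := by
  induction W using TensorProduct.induction_on with
  | zero =>
      have : deltaL H (0 : A ⊗[ℂ] A) = 0 := by ext β; simp [deltaL]
      simp [this]
  | tmul p q =>
      have : deltaL H (p ⊗ₜ[ℂ] q) = (rTensor A (mulRight ℂ p)) ∘ₗ (H.T1.flip q) := by
        ext β; simp [deltaL, ← mulRight_T1 H]
      rw [this]
      simp [innerMap]
  | add x y hx hy =>
      have : deltaL H (x + y) = deltaL H x + deltaL H y := by ext β; simp [deltaL]
      simp only [map_add, hx, hy, this, LinearMap.lTensor_add, LinearMap.add_apply]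

lemma star_lemma (H : RegMultHopf (A := A)) (a b b' : A) :
    TensorProduct.lift (starMap H a) (H.T1 b b') =
      (TensorProduct.assoc ℂ A A A).symm
        (lTensor A (H.T1.flip b') (H.T1 a b)) := by
  rw [LinearEquiv.eq_symm_apply]
  have hdet : ∀ x : A, (∀ u : A, mulLeft ℂ u x = 0) → x = 0 := fun x hx =>
    H.nondegR x (by simpa using hx)
  apply detect_first (fun u => mulLeft ℂ u) hdet
  intro u
  -- Left-hand side
  have step2 : (starMap H a).compr₂ (rTensor A (rTensor A (mulLeft ℂ u))) =
      (innerMap H (H.T2 u a)).compr₂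
        ((TensorProduct.assoc ℂ A A A).symm : A ⊗[ℂ] (A ⊗[ℂ] A) ≃ₗ[ℂ] _).toLinearMap := by
    apply LinearMap.ext; intro p
    apply LinearMap.ext; intro q
    show rTensor A (rTensor A (mulLeft ℂ u)) (rTensor A (H.T1.flip p) (H.T1 a q)) =
      (TensorProduct.assoc ℂ A A A).symm
        (lTensor A ((rTensor A (mulRight ℂ p)) ∘ₗ (H.T1.flip q)) (H.T2 u a))
    rw [← LinearMap.comp_apply, ← LinearMap.rTensor_comp]
    have hmap : (rTensor A (mulLeft ℂ u)) ∘ₗ (H.T1.flip p) =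
        (lTensor A (mulRight ℂ p)) ∘ₗ (H.T2 u) := by
      ext r
      simp only [LinearMap.comp_apply, LinearMap.flip_apply]
      exact mulLeft_T1 H u r p
    rw [hmap, LinearMap.rTensor_comp, LinearMap.comp_apply]
    have hco : rTensor A (H.T2 u) (H.T1 a q) =
        (TensorProduct.assoc ℂ A A A).symm
          (lTensor A (H.T1.flip q) (H.T2 u a)) := by
      rw [LinearEquiv.eq_symm_apply]
      exact H.coassoc u a q
    rw [hco, ← assoc_symm_mid, LinearMap.lTensor_comp, LinearMap.comp_apply]
  -- assemble
  have lhs_eq : rTensor (A ⊗[ℂ] A) (mulLeft ℂ u)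
      ((TensorProduct.assoc ℂ A A A) (TensorProduct.lift (starMap H a) (H.T1 b b'))) =
      TensorProduct.lift (innerMap H (H.T2 u a)) (H.T1 b b') := by
    rw [← assoc_rT_rT, ← LinearMap.comp_apply, ← TensorProduct.lift_compr₂, step2,
      TensorProduct.lift_compr₂, LinearMap.comp_apply]
    simp
  rw [lhs_eq, swap_lemma]
  have hdelta : deltaL H (H.T1 b b') = (H.T1.flip b') ∘ₗ (mulRight ℂ b) := by
    ext β
    simp only [deltaL, LinearMap.coe_mk, AddHom.coe_mk, LinearMap.comp_apply,
      LinearMap.flip_apply, LinearMap.mulRight_apply]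
    rw [← T1_mul_left H]
  rw [hdelta, rT_lT_comm, mulLeft_T1 H, LinearMap.lTensor_comp, LinearMap.comp_apply]

end StarLemma
section SmashLemmas

variable {A : Type*} [NonUnitalRing A] [Module ℂ A] [SMulCommClass ℂ A A]
  [IsScalarTower ℂ A A]
variable {R : Type*} [AddCommGroup R] [Module ℂ R]

open LinearMap

/-- The left multiplier `π(a)` on the smash product. -/
noncomputable def piL (H : RegMultHopf (A := A)) (act : A →ₗ[ℂ] R →ₗ[ℂ] R) (a : A) :
    R ⊗[ℂ] A →ₗ[ℂ] R ⊗[ℂ] A :=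
  TensorProduct.lift <| LinearMap.mk₂ ℂ
    (fun x' a' => rTensor A (act.flip x') (H.T1 a a'))
    (fun x y a' => by simp [map_add, LinearMap.rTensor_add])
    (fun c x a' => by simp [map_smul, LinearMap.rTensor_smul])
    (fun x a' b' => by simp [map_add])
    (fun c x a' => by simp [map_smul])

@[simp] lemma piL_apply (H : RegMultHopf (A := A)) (act : A →ₗ[ℂ] R →ₗ[ℂ] R)
    (a a' : A) (x' : R) :
    piL H act a (x' ⊗ₜ[ℂ] a') = rTensor A (act.flip x') (H.T1 a a') := by
  simp [piL]

/-- The right multiplier `π(a)` on the smash product. -/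
noncomputable def piR (a : A) : R ⊗[ℂ] A →ₗ[ℂ] R ⊗[ℂ] A :=
  lTensor R (mulRight ℂ a)

@[simp] lemma piR_apply (a a' : A) (x' : R) :
    piR (R := R) a (x' ⊗ₜ[ℂ] a') = x' ⊗ₜ[ℂ] (a' * a) := rfl

variable {H : RegMultHopf (A := A)} {mulR : R →ₗ[ℂ] R →ₗ[ℂ] R}
  {act : A →ₗ[ℂ] R →ₗ[ℂ] R}
  {μ : (R ⊗[ℂ] A) →ₗ[ℂ] (R ⊗[ℂ] A) →ₗ[ℂ] (R ⊗[ℂ] A)}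

lemma pi_middle (hMA : IsModAlg H mulR act) (hμ : IsSmashMul H mulR act μ)
    (a : A) (u v : R ⊗[ℂ] A) : μ u (piL H act a v) = μ (piR a u) v := by
  induction u using TensorProduct.induction_on with
  | zero => simp
  | add x y hx hy => simp only [map_add, LinearMap.add_apply, hx, hy]
  | tmul x b =>
    induction v using TensorProduct.induction_on with
    | zero => simp
    | add x y hx hy => simp only [map_add, LinearMap.add_apply, hx, hy]
    | tmul x' b' =>
      rw [piL_apply, piR_apply, hμ, T1_mul_left H]
      have key : ∀ t : A ⊗[ℂ] A,
          μ (x ⊗ₜ[ℂ] b) (rTensor A (act.flip x') t) =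
            TensorProduct.lift (smashPair mulR act x x') ((H.Δ b).L t) := by
        intro t
        induction t using TensorProduct.induction_on with
        | zero => simp
        | add s t hs ht => simp only [map_add, hs, ht]
        | tmul r s =>
          rw [LinearMap.rTensor_tmul, LinearMap.flip_apply, hμ, ← mulRight_T1 H]
          have inner : ∀ t' : A ⊗[ℂ] A,
              TensorProduct.lift (smashPair mulR act x (act r x')) t' =
                TensorProduct.lift (smashPair mulR act x x')
                  (rTensor A (mulRight ℂ r) t') := by
            intro t'
            induction t' using TensorProduct.induction_on with
            | zero => simp
            | add s t hs ht => simp only [map_add, hs, ht]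
            | tmul p q =>
              simp [smashPair, ← hMA.act_act]
              rfl
          exact inner _
      exact key _

lemma pi_R_mul (hμ : IsSmashMul H mulR act μ)
    (a : A) (u v : R ⊗[ℂ] A) : piR a (μ u v) = μ u (piR a v) := by
  induction u using TensorProduct.induction_on with
  | zero => simp
  | add x y hx hy => simp only [map_add, LinearMap.add_apply, hx, hy]
  | tmul x b =>
    induction v using TensorProduct.induction_on with
    | zero => simp
    | add x y hx hy => simp only [map_add, LinearMap.add_apply, hx, hy]
    | tmul x' b' =>
      rw [piR_apply, hμ, hμ, T1_mul_right H]
      have key : ∀ t : A ⊗[ℂ] A,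
          piR a (TensorProduct.lift (smashPair mulR act x x') t) =
            TensorProduct.lift (smashPair mulR act x x')
              (lTensor A (mulRight ℂ a) t) := by
        intro t
        induction t using TensorProduct.induction_on with
        | zero => simp
        | add s t hs ht => simp only [map_add, hs, ht]
        | tmul p q =>
          simp [smashPair, piR]
          rfl
      exact key _

lemma pi_L_mul (hMA : IsModAlg H mulR act) (hμ : IsSmashMul H mulR act μ)
    (a : A) (u v : R ⊗[ℂ] A) : piL H act a (μ u v) = μ (piL H act a u) v := by
  induction u using TensorProduct.induction_on with
  | zero => simp
  | add x y hx hy => simp only [map_add, LinearMap.add_apply, hx, hy]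
  | tmul x b =>
    induction v using TensorProduct.induction_on with
    | zero => simp
    | add x y hx hy => simp only [map_add, LinearMap.add_apply, hx, hy]
    | tmul x' b' =>
      rw [piL_apply, hμ]
      set Λ : (A ⊗[ℂ] A) ⊗[ℂ] A →ₗ[ℂ] R ⊗[ℂ] A :=
        rTensor A (TensorProduct.lift (actPair mulR act x x')) with hΛ
      have claimB : ∀ w : A ⊗[ℂ] A,
          piL H act a (TensorProduct.lift (smashPair mulR act x x') w) =
            Λ (TensorProduct.lift (starMap H a) w) := by
        intro w
        induction w using TensorProduct.induction_on with
        | zero => simp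
        | add s t hs ht => simp only [map_add, hs, ht]
        | tmul p q =>
          have h1 : TensorProduct.lift (smashPair mulR act x x') (p ⊗ₜ[ℂ] q) =
              (mulR x (act p x')) ⊗ₜ[ℂ] q := by simp [smashPair]; rfl
          have h2 : TensorProduct.lift (starMap H a) (p ⊗ₜ[ℂ] q) =
              rTensor A (H.T1.flip p) (H.T1 a q) := by simp [starMap]
          rw [h1, h2, piL_apply]
          have sub : ∀ t : A ⊗[ℂ] A,
              rTensor A (act.flip (mulR x (act p x'))) t =
                Λ (rTensor A (H.T1.flip p) t) := by
            intro t
            induction t using TensorProduct.induction_on with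
            | zero => simp
            | add s t hs ht => simp only [map_add, hs, ht]
            | tmul r s =>
              rw [LinearMap.rTensor_tmul, LinearMap.rTensor_tmul, hΛ,
                LinearMap.rTensor_tmul, LinearMap.flip_apply, LinearMap.flip_apply,
                hMA.compat r p x x']
          exact sub _
      have claimA : ∀ w : A ⊗[ℂ] A,
          μ (rTensor A (act.flip x) w) (x' ⊗ₜ[ℂ] b') =
            Λ ((TensorProduct.assoc ℂ A A A).symm
              (lTensor A (H.T1.flip b') w)) := by
        intro w
        induction w using TensorProduct.induction_on with
        | zero => simp
        | add s t hs ht => simp only [map_add, LinearMap.add_apply, hs, ht]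
        | tmul r s =>
          rw [LinearMap.rTensor_tmul, LinearMap.flip_apply, hμ,
            LinearMap.lTensor_tmul, LinearMap.flip_apply]
          have sub : ∀ t : A ⊗[ℂ] A,
              TensorProduct.lift (smashPair mulR act (act r x) x') t =
                Λ ((TensorProduct.assoc ℂ A A A).symm (r ⊗ₜ[ℂ] t)) := by
            intro t
            induction t using TensorProduct.induction_on with
            | zero => simp
            | add s t hs ht =>
                simp only [TensorProduct.tmul_add, map_add, hs, ht]
            | tmul p q =>
              rw [TensorProduct.assoc_symm_tmul, hΛ, LinearMap.rTensor_tmul]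
              simp [smashPair, actPair]
              rfl
          exact sub _
      rw [claimB _, star_lemma H a b b', ← claimA _]
end SmashLemmas
section ProdSpan

variable {A : Type*} [NonUnitalRing A] [Module ℂ A] [SMulCommClass ℂ A A]
  [IsScalarTower ℂ A A]

open LinearMap

lemma mem_prod_span (H : RegMultHopf (A := A)) (c : A) :
    c ∈ Submodule.span ℂ {y : A | ∃ p q : A, p * q = y} := by
  by_cases hc : ∀ a : A, H.counit a = 0
  · have hε : H.counit = 0 := LinearMap.ext hc
    have hzero : c = 0 := by
      apply H.nondegL
      intro b
      rw [← H.counit_T1 c b, hε]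
      simp [sliceL]
    rw [hzero]; exact Submodule.zero_mem _
  · push_neg at hc
    obtain ⟨a, ha⟩ := hc
    have h1 : H.counit ((H.counit a)⁻¹ • a) = 1 := by
      rw [map_smul, smul_eq_mul, inv_mul_cancel₀ ha]
    have h2 : c = LinearMap.mul' ℂ A (rTensor A H.S (H.T1 ((H.counit a)⁻¹ • a) c)) := by
      rw [H.S_T1, h1, one_smul]
    rw [h2]
    generalize H.T1 ((H.counit a)⁻¹ • a) c = t
    induction t using TensorProduct.induction_on with
    | zero => simpa using Submodule.zero_mem _
    | tmul p q =>
        rw [LinearMap.rTensor_tmul, LinearMap.mul'_apply]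
        exact Submodule.subset_span ⟨H.S p, q, rfl⟩
    | add x y hx hy => rw [map_add, map_add]; exact Submodule.add_mem _ hx hy

end ProdSpan
/-! ## STATEMENT 6 -/

noncomputable section

open LinearMap

/-- **Proposition 5.7.** There is a well-defined map `π : A → M(R # A)`
determined by `π(a)(x' # a') = Σ a₍₁₎x' # a₍₂₎a'` and
`(x' # a')π(a) = x' # a'a`; it is an algebra homomorphism, and it is unital:
`π(A)(R # A) = (R # A)π(A) = R # A`. -/
theorem exists_canonical_embedding_of_A_in_smash_multipliers
    {A : Type*} [NonUnitalRing A] [Module ℂ A] [SMulCommClass ℂ A A]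
    [IsScalarTower ℂ A A] {R : Type*} [AddCommGroup R] [Module ℂ R]
    (H : RegMultHopf (A := A)) (mulR : R →ₗ[ℂ] R →ₗ[ℂ] R)
    (act : A →ₗ[ℂ] R →ₗ[ℂ] R) (hMA : IsModAlg H mulR act)
    (μ : (R ⊗[ℂ] A) →ₗ[ℂ] (R ⊗[ℂ] A) →ₗ[ℂ] (R ⊗[ℂ] A))
    (hμ : IsSmashMul H mulR act μ) :
    ∃ π : A → MulPair μ,
      (∀ (a a' : A) (x' : R),
        (π a).L (x' ⊗ₜ[ℂ] a') = LinearMap.rTensor A (act.flip x') (H.T1 a a')) ∧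
      (∀ (a a' : A) (x' : R),
        (π a).R (x' ⊗ₜ[ℂ] a') = x' ⊗ₜ[ℂ] (a' * a)) ∧
      (∀ a a' : A, π (a + a') = π a + π a') ∧
      (∀ (c : ℂ) (a : A), π (c • a) = c • π a) ∧
      (∀ a a' : A, π (a * a') = π a * π a') ∧
      Submodule.span ℂ {w : R ⊗[ℂ] A | ∃ a u, (π a).L u = w} = ⊤ ∧
      Submodule.span ℂ {w : R ⊗[ℂ] A | ∃ a u, (π a).R u = w} = ⊤ := by
  classical
  refine ⟨fun a => ⟨piL H act a, piR a, pi_L_mul hMA hμ a, pi_R_mul hμ a,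
    pi_middle hMA hμ a⟩, fun a a' x' => piL_apply H act a a' x',
    fun a a' x' => rfl, ?_, ?_, ?_, ?_, ?_⟩
  · -- additivity
    intro a a'
    refine MulPair.ext ?_ ?_
    · apply TensorProduct.ext'
      intro x' b
      show piL H act (a + a') (x' ⊗ₜ[ℂ] b) = (piL H act a + piL H act a') (x' ⊗ₜ[ℂ] b)
      simp [map_add, LinearMap.add_apply]
    · apply TensorProduct.ext'
      intro x' b
      show piR (a + a') (x' ⊗ₜ[ℂ] b) = piR a (x' ⊗ₜ[ℂ] b) + piR a' (x' ⊗ₜ[ℂ] b)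
      simp [mul_add, TensorProduct.tmul_add]
  · -- scalar multiplication
    intro c a
    refine MulPair.ext ?_ ?_
    · apply TensorProduct.ext'
      intro x' b
      show piL H act (c • a) (x' ⊗ₜ[ℂ] b) = c • piL H act a (x' ⊗ₜ[ℂ] b)
      simp [map_smul, LinearMap.smul_apply]
    · apply TensorProduct.ext'
      intro x' b
      show piR (c • a) (x' ⊗ₜ[ℂ] b) = c • piR a (x' ⊗ₜ[ℂ] b)
      simp [mul_smul_comm]
  · -- multiplicativity
    intro a a'
    refine MulPair.ext ?_ ?_
    · apply TensorProduct.ext'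
      intro x' b'
      show piL H act (a * a') (x' ⊗ₜ[ℂ] b') =
        (piL H act a ∘ₗ piL H act a') (x' ⊗ₜ[ℂ] b')
      rw [LinearMap.comp_apply, piL_apply, piL_apply, T1_mul_left H]
      have E : ∀ t : A ⊗[ℂ] A,
          piL H act a (rTensor A (act.flip x') t) =
            rTensor A (act.flip x') ((H.Δ a).L t) := by
        intro t
        induction t using TensorProduct.induction_on with
        | zero => simp
        | add s t hs ht => simp only [map_add, hs, ht]
        | tmul r s =>
          have h1 : rTensor A (act.flip x') ((H.Δ a).L (r ⊗ₜ[ℂ] s)) =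
              rTensor A ((act.flip x') ∘ₗ mulRight ℂ r) (H.T1 a s) := by
            rw [← mulRight_T1 H, ← LinearMap.comp_apply, ← LinearMap.rTensor_comp]
          have h2 : (act.flip (act r x')) = (act.flip x') ∘ₗ mulRight ℂ r := by
            ext α; simp [hMA.act_act]
          rw [LinearMap.rTensor_tmul, LinearMap.flip_apply, piL_apply, h1, h2]
      rw [E]
    · apply TensorProduct.ext'
      intro x' b'
      show piR (a * a') (x' ⊗ₜ[ℂ] b') = (piR a' ∘ₗ piR a) (x' ⊗ₜ[ℂ] b')
      simp [mul_assoc]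
  · -- left unitality
    rw [eq_top_iff]
    rintro w -
    induction w using TensorProduct.induction_on with
    | zero => exact Submodule.zero_mem _
    | add x y hx hy => exact Submodule.add_mem _ hx hy
    | tmul x c =>
      have hx : x ∈ Submodule.span ℂ {y : R | ∃ a z, act a z = y} := by
        rw [hMA.unital]; trivial
      refine Submodule.span_induction ?_ ?_ ?_ ?_ hx
      · rintro y ⟨d, z, rfl⟩
        obtain ⟨w0, hw0⟩ := H.T1_bij.2 (d ⊗ₜ[ℂ] c)
        have key : ∀ w0 : A ⊗[ℂ] A, rTensor A (act.flip z) (TensorProduct.lift H.T1 w0) ∈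
            Submodule.span ℂ {w : R ⊗[ℂ] A | ∃ a u,
              (⟨piL H act a, piR a, pi_L_mul hMA hμ a, pi_R_mul hμ a,
                pi_middle hMA hμ a⟩ : MulPair μ).L u = w} := by
          intro w0
          induction w0 using TensorProduct.induction_on with
          | zero => simpa using Submodule.zero_mem _
          | tmul α α' =>
            refine Submodule.subset_span ⟨α, z ⊗ₜ[ℂ] α', ?_⟩
            simp
          | add s t hs ht => rw [map_add, map_add]; exact Submodule.add_mem _ hs ht
        have key2 := key w0
        rw [hw0] at key2
        simpa using key2
      · simpa using Submodule.zero_mem _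
      · intro y y' _ _ hy hy'
        rw [TensorProduct.add_tmul]; exact Submodule.add_mem _ hy hy'
      · intro c' y _ hy
        rw [← TensorProduct.smul_tmul']; exact Submodule.smul_mem _ _ hy
  · -- right unitality
    rw [eq_top_iff]
    rintro w -
    induction w using TensorProduct.induction_on with
    | zero => exact Submodule.zero_mem _
    | add x y hx hy => exact Submodule.add_mem _ hx hy
    | tmul x c =>
      refine Submodule.span_induction ?_ ?_ ?_ ?_ (mem_prod_span H c)
      · rintro y ⟨p, q, rfl⟩
        refine Submodule.subset_span ⟨q, x ⊗ₜ[ℂ] p, ?_⟩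
        simp
      · simpa using Submodule.zero_mem _
      · intro y y' _ _ hy hy'
        rw [TensorProduct.tmul_add]; exact Submodule.add_mem _ hy hy'
      · intro c' y _ hy
        rw [TensorProduct.tmul_smul]; exact Submodule.smul_mem _ _ hy

end
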